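/- Let Σ be a ranked alphabet containing a binary symbol, and let B=(B,⊕,⊗,0,1) be a semiring which is finitely generated (i.e., ⟨A⟩_{⊕,⊗,0,1}=B for some finite A⊆B). Then there exists a (Σ,B)-weighted tree automaton 𝒜 such that the image of its run semantics satisfies im(⟦𝒜⟧_run) = B. -/

import Mathlib

/-- A strong bimonoid: `(B,+,0)` a commutative monoid, `(B,*,1)` a monoid,
and `0` annihilating for `*`. -/
class StrongBimonoid (B : Type*) extends AddCommMonoid B, MonoidWithZero B

section Defs

variable {B : Type*} [StrongBimonoid B]

/-- The closure `⟨A⟩_{⊕,⊗,0,1}` of a subset `A`: the smallest subset of `B`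
containing `A ∪ {0,1}` and closed under `+` and `*`. -/
inductive SBClosure (A : Set B) : B → Prop
  | base {a : B} : a ∈ A → SBClosure A a
  | zero : SBClosure A 0
  | one : SBClosure A 1
  | add {a b : B} : SBClosure A a → SBClosure A b → SBClosure A (a + b)
  | mul {a b : B} : SBClosure A a → SBClosure A b → SBClosure A (a * b)

/-- `B` is locally finite if the closure of each finite subset is finite. -/
def SBLocallyFinite (B : Type*) [StrongBimonoid B] : Prop :=
  ∀ A : Set B, A.Finite → {b : B | SBClosure A b}.Finite

/-- The weak closure `wcl(A)`: the smallest subset containing `A ∪ {0,1}` closed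
under addition and under multiplication on the right by elements of `A`. -/
inductive WeakClosure (A : Set B) : B → Prop
  | base {a : B} : a ∈ A → WeakClosure A a
  | zero : WeakClosure A 0
  | one : WeakClosure A 1
  | add {b b' : B} : WeakClosure A b → WeakClosure A b' → WeakClosure A (b + b')
  | mulr {b a : B} : WeakClosure A b → a ∈ A → WeakClosure A (b * a)

/-- `B` is weakly locally finite if the weak closure of each finite subset is finite. -/
def WeaklyLocallyFinite (B : Type*) [StrongBimonoid B] : Prop :=
  ∀ A : Set B, A.Finite → {b : B | WeakClosure A b}.Finite

/-- `B` is additively locally finite if each finitely generated submonoid of `(B,+,0)` is finite. -/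
def AddLocallyFinite (B : Type*) [StrongBimonoid B] : Prop :=
  ∀ A : Set B, A.Finite → ((AddSubmonoid.closure A : AddSubmonoid B) : Set B).Finite

/-- `B` is multiplicatively locally finite if each finitely generated submonoid of `(B,*,1)` is finite. -/
def MulLocallyFinite (B : Type*) [StrongBimonoid B] : Prop :=
  ∀ A : Set B, A.Finite → ((Submonoid.closure A : Submonoid B) : Set B).Finite

/-- `B` is bi-locally finite if it is additively and multiplicatively locally finite. -/
def BiLocallyFinite (B : Type*) [StrongBimonoid B] : Prop :=
  AddLocallyFinite B ∧ MulLocallyFinite B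

/-- `B` is almost idempotent if `b + b + b = b + b` for all `b`. -/
def AlmostIdempotent (B : Type*) [StrongBimonoid B] : Prop :=
  ∀ b : B, b + b + b = b + b

/-- right-distributivity -/
def SBRightDistributive (B : Type*) [StrongBimonoid B] : Prop :=
  ∀ a b c : B, (a + b) * c = a * c + b * c

/-- left-distributivity -/
def SBLeftDistributive (B : Type*) [StrongBimonoid B] : Prop :=
  ∀ a b c : B, a * (b + c) = a * b + a * c

end Defs

/-- A ranked alphabet: a finite nonempty set of symbols with a rank map,
having at least one nullary symbol. -/
structure RankedAlphabet where
  symb : Type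
  fintype_symb : Fintype symb
  nonempty_symb : Nonempty symb
  rk : symb → ℕ
  exists_nullary : ∃ σ, rk σ = 0

attribute [instance] RankedAlphabet.fintype_symb RankedAlphabet.nonempty_symb

/-- Trees (ground terms) over a ranked alphabet. -/
inductive RTree (S : RankedAlphabet) : Type
  | node (σ : S.symb) (ts : Fin (S.rk σ) → RTree S) : RTree S

/-- A weighted tree automaton over the ranked alphabet `S` and the strong bimonoid `B`. -/
structure WTA (S : RankedAlphabet) (B : Type) [StrongBimonoid B] where
  Q : Type
  fintypeQ : Fintype Q
  nonemptyQ : Nonempty Q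
  δ : (σ : S.symb) → (Fin (S.rk σ) → Q) → Q → B
  F : Q → B

attribute [instance] WTA.fintypeQ WTA.nonemptyQ

variable {S : RankedAlphabet} {B : Type} [StrongBimonoid B]

/-- The vector `h_𝒜(t) ∈ B^Q`:
`h_𝒜(σ(t_1,…,t_k))_q = ⊕_{q_1⋯q_k ∈ Q^k} (⊗_i h_𝒜(t_i)_{q_i}) ⊗ δ_k(q_1⋯q_k,σ,q)`. -/
def WTA.h (M : WTA S B) : RTree S → M.Q → B
  | .node σ ts => fun q =>
      ∑ qs : Fin (S.rk σ) → M.Q,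
        (((List.finRange (S.rk σ)).map (fun i => M.h (ts i) (qs i))).prod) * M.δ σ qs q

/-- The initial algebra semantics `⟦𝒜⟧_init(t) = ⊕_{q ∈ Q} h_𝒜(t)_q ⊗ F_q`. -/
noncomputable def WTA.initSem (M : WTA S B) (t : RTree S) : B :=
  ∑ q, M.h t q * M.F q

/-- The positions of a tree (as lists of natural numbers). -/
def RTree.pos : RTree S → Finset (List ℕ)
  | .node _ ts =>
      insert [] (Finset.univ.biUnion fun i => ((ts i).pos).image (fun w => (i : ℕ) :: w))

/-- The weight of a run `ρ` (given as a total map on positions) on a tree: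
`wt(σ(t_1,…,t_k),ρ) = (⊗_i wt(t_i,ρ_i)) ⊗ δ_k(ρ(1)⋯ρ(k),σ,ρ(ε))`. -/
def WTA.wt (M : WTA S B) : RTree S → (List ℕ → M.Q) → B
  | .node σ ts => fun ρ =>
      (((List.finRange (S.rk σ)).map
          (fun i => M.wt (ts i) (fun w => ρ ((i : ℕ) :: w)))).prod)
        * M.δ σ (fun i => ρ [(i : ℕ)]) (ρ [])

/-- Extend a run, defined on the positions of `t`, to a total map on `List ℕ`. -/
noncomputable def WTA.extend (M : WTA S B) (t : RTree S) (ρ : ↑(t.pos) → M.Q) :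
    List ℕ → M.Q :=
  fun w => if h : w ∈ t.pos then ρ ⟨w, h⟩ else Classical.choice M.nonemptyQ

/-- The run semantics `⟦𝒜⟧_run(t) = ⊕_{ρ run of 𝒜 on t} wt(t,ρ) ⊗ F_{ρ(ε)}`. -/
noncomputable def WTA.runSem (M : WTA S B) (t : RTree S) : B :=
  ∑ ρ : (↑(t.pos) → M.Q), M.wt t (M.extend t ρ) * M.F (M.extend t ρ [])

/-
In a semiring the sum over runs can be computed bottom-up, so the run semantics agrees with the
initial algebra semantics `⊕_q h(t)_q ⊗ F_q`. It therefore suffices to realise every element of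
`B` as `h(t)_val` for one automaton. Let `a₁, …, aₙ` enumerate the generators together with `0`
and `1`; every element is then an expression in the `aᵢ` built with `⊕` and `⊗`. Binary trees
encode such expressions: the generator `aᵢ` is selected by a comb of height `i`, recognised
deterministically, and an expression tree for `b` has `h(t) = b·[val] + 1·[one]`. The companion
weight `1` is what makes `b ⊕ b' = b ⊗ 1 ⊕ 1 ⊗ b'` appear at a binary node next to `b ⊗ b'`.
-/

abbrev semiringOfDistrib (hld : SBLeftDistributive B) (hrd : SBRightDistributive B) :
    Semiring B :=
  { ‹StrongBimonoid B› with
    left_distrib := fun a b c => hld a b c, right_distrib := fun a b c => hrd a b c }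

theorem List.prod_map_finRange_succ {M : Type*} [Monoid M] {k : ℕ} (f : Fin (k + 1) → M) :
    ((List.finRange (k + 1)).map f).prod
      = f 0 * ((List.finRange k).map fun i => f i.succ).prod := by
  rw [List.finRange_succ, List.map_cons, List.prod_cons, List.map_map]
  rfl

theorem sum_pi_prod_mul_eq_of_forall (hld : SBLeftDistributive B) (hrd : SBRightDistributive B)
    {Q : Type*} [Fintype Q] {k : ℕ} {R : Fin k → Type*} [∀ i, Fintype (R i)]
    (W : ∀ i, R i → B) (r : ∀ i, R i → Q) (H : Fin k → Q → B)
    (hWH : ∀ i (f : Q → B), ∑ ρ, W i ρ * f (r i ρ) = ∑ q, H i q * f q) (g : (Fin k → Q) → B) :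
    ∑ ρs : (∀ i, R i), ((List.finRange k).map fun i => W i (ρs i)).prod * g (fun i => r i (ρs i))
      = ∑ qs : Fin k → Q, ((List.finRange k).map fun i => H i (qs i)).prod * g qs := by
  let := semiringOfDistrib hld hrd
  induction k with
  | zero =>
    simp only [Fintype.sum_unique, List.finRange_zero, List.map_nil, List.prod_nil, one_mul]
    exact congrArg g (Subsingleton.elim _ _)
  | succ k ih =>
    have hcons (ρ0 : R 0) (ρs : ∀ i : Fin k, R i.succ) :
        (fun i => r i (Fin.cons ρ0 ρs i)) = Fin.cons (r 0 ρ0) fun i => r i.succ (ρs i) := by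
      funext i
      cases i using Fin.cases <;> simp
    calc _ = ∑ ρ0 : R 0, W 0 ρ0 * ∑ ρs : ∀ i : Fin k, R i.succ,
              ((List.finRange k).map fun i => W i.succ (ρs i)).prod
                * g (Fin.cons (r 0 ρ0) fun i => r i.succ (ρs i)) := by
          rw [← (Fin.consEquiv R).sum_comp, Fintype.sum_prod_type]
          simp [Finset.mul_sum, List.prod_map_finRange_succ, hcons, mul_assoc, Fin.consEquiv]
      _ = ∑ q0 : Q, H 0 q0 * ∑ qs : Fin k → Q,
              ((List.finRange k).map fun i => H i.succ (qs i)).prod * g (Fin.cons q0 qs) := by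
          rw [← hWH 0]
          refine Finset.sum_congr rfl fun ρ0 _ => congrArg (W 0 ρ0 * ·) ?_
          exact ih (fun i => W i.succ) (fun i => r i.succ) (fun i => H i.succ)
            (fun i => hWH i.succ) fun qs => g (Fin.cons (r 0 ρ0) qs)
      _ = _ := by
          rw [← (Fin.consEquiv fun _ => Q).sum_comp, Fintype.sum_prod_type]
          simp [Finset.mul_sum, List.prod_map_finRange_succ, mul_assoc, Fin.consEquiv]

theorem sum_pi_prod_mul_of_eq_two {Q : Type*} [Fintype Q] {k : ℕ} (hk : k = 2)
    (u : Fin k → Q → B) (g : (Fin k → Q) → B) :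
    ∑ qs : Fin k → Q, ((List.finRange k).map fun i => u i (qs i)).prod * g qs
      = ∑ q₁, ∑ q₂, u ⟨0, by omega⟩ q₁ * u ⟨1, by omega⟩ q₂
          * g fun i => if (i : ℕ) = 0 then q₁ else q₂ := by
  subst hk
  rw [← (piFinTwoEquiv fun _ => Q).symm.sum_comp, Fintype.sum_prod_type]
  refine Finset.sum_congr rfl fun q₁ _ => Finset.sum_congr rfl fun q₂ _ => ?_
  have hq : Fin.cons q₁ (Fin.cons q₂ finZeroElim)
      = fun i : Fin 2 => if (i : ℕ) = 0 then q₁ else q₂ := by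
    funext i; fin_cases i <;> rfl
  simp [List.finRange_succ, hq, mul_assoc]

namespace RTree

theorem nil_mem_pos (t : RTree S) : [] ∈ t.pos := by
  cases t
  simp [RTree.pos]

theorem cons_mem_pos_node {σ : S.symb} {ts : Fin (S.rk σ) → RTree S} {j : ℕ} {w : List ℕ} :
    j :: w ∈ (node σ ts).pos ↔ ∃ hj : j < S.rk σ, w ∈ (ts ⟨j, hj⟩).pos := by
  simp only [RTree.pos, Finset.mem_insert, Finset.mem_biUnion, Finset.mem_univ, true_and,
    Finset.mem_image, List.cons.injEq, reduceCtorEq, false_or]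
  constructor
  · rintro ⟨i, v, hv, rfl, rfl⟩
    exact ⟨i.isLt, hv⟩
  · rintro ⟨hj, hw⟩
    exact ⟨⟨j, hj⟩, w, hw, rfl, rfl⟩

def runEquiv (Q : Type) (σ : S.symb) (ts : Fin (S.rk σ) → RTree S) :
    (↑(node σ ts).pos → Q) ≃ Q × ∀ i, (↑(ts i).pos → Q) where
  toFun ρ := (ρ ⟨[], nil_mem_pos _⟩,
    fun i w => ρ ⟨(i : ℕ) :: w.1, cons_mem_pos_node.2 ⟨i.isLt, w.2⟩⟩)
  invFun p
    | ⟨[], _⟩ => p.1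
    | ⟨j :: w, hw⟩ => p.2 ⟨j, (cons_mem_pos_node.1 hw).1⟩ ⟨w, (cons_mem_pos_node.1 hw).2⟩
  left_inv ρ := by
    funext ⟨w, hw⟩
    cases w <;> rfl
  right_inv _ := rfl

def leaf {α : S.symb} (hα : S.rk α = 0) : RTree S :=
  node α fun i => absurd i.isLt (by omega)

def bin (σ : S.symb) (t₁ t₂ : RTree S) : RTree S :=
  node σ fun i => if (i : ℕ) = 0 then t₁ else t₂

def comb (σ : S.symb) {α : S.symb} (hα : S.rk α = 0) : ℕ → RTree S
  | 0 => bin σ (leaf hα) (leaf hα)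
  | k + 1 => bin σ (leaf hα) (comb σ hα k)

end RTree

namespace WTA

section runEquiv

variable (M : WTA S B) (σ : S.symb) (ts : Fin (S.rk σ) → RTree S)
  (p : M.Q × ∀ i, (↑(ts i).pos → M.Q))

theorem extend_runEquiv_symm_nil :
    M.extend (.node σ ts) ((RTree.runEquiv M.Q σ ts).symm p) [] = p.1 := by
  simp [WTA.extend, RTree.nil_mem_pos, RTree.runEquiv]

theorem extend_runEquiv_symm_cons (i : Fin (S.rk σ)) (w : List ℕ) :
    M.extend (.node σ ts) ((RTree.runEquiv M.Q σ ts).symm p) ((i : ℕ) :: w)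
      = M.extend (ts i) (p.2 i) w := by
  by_cases hw : w ∈ (ts i).pos
  · simp [WTA.extend, RTree.cons_mem_pos_node, hw, RTree.runEquiv]
  · simp [WTA.extend, RTree.cons_mem_pos_node, hw]

end runEquiv

theorem sum_wt_mul_eq_sum_h_mul (hld : SBLeftDistributive B) (hrd : SBRightDistributive B)
    (M : WTA S B) (t : RTree S) (f : M.Q → B) :
    ∑ ρ : ↑t.pos → M.Q, M.wt t (M.extend t ρ) * f (M.extend t ρ []) = ∑ q, M.h t q * f q := by
  let := semiringOfDistrib hld hrd
  induction t generalizing f with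
  | node σ ts ih =>
    calc _ = ∑ q, ∑ ρs : ∀ i, (↑(ts i).pos → M.Q),
              ((List.finRange (S.rk σ)).map fun i => M.wt (ts i) (M.extend (ts i) (ρs i))).prod
                * (M.δ σ (fun i => M.extend (ts i) (ρs i) []) q * f q) := by
          rw [← (RTree.runEquiv M.Q σ ts).symm.sum_comp, Fintype.sum_prod_type]
          simp only [WTA.wt, extend_runEquiv_symm_nil, extend_runEquiv_symm_cons, mul_assoc]
      _ = ∑ q, ∑ qs : Fin (S.rk σ) → M.Q,
              ((List.finRange (S.rk σ)).map fun i => M.h (ts i) (qs i)).prod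
                * (M.δ σ qs q * f q) := by
          refine Finset.sum_congr rfl fun q _ => ?_
          exact sum_pi_prod_mul_eq_of_forall hld hrd _ _ _ (fun i => ih i)
            fun qs => M.δ σ qs q * f q
      _ = _ := by simp only [WTA.h, Finset.sum_mul, mul_assoc]

theorem runSem_eq_initSem (hld : SBLeftDistributive B) (hrd : SBRightDistributive B)
    (M : WTA S B) : M.runSem = M.initSem :=
  funext fun t => M.sum_wt_mul_eq_sum_h_mul hld hrd t M.F

theorem h_leaf (M : WTA S B) {α : S.symb} (hα : S.rk α = 0) (qs : Fin (S.rk α) → M.Q) :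
    M.h (.leaf hα) = M.δ α qs := by
  have : IsEmpty (Fin (S.rk α)) := by rw [hα]; infer_instance
  have hnil : List.finRange (S.rk α) = [] := List.eq_nil_of_length_eq_zero (by simp [hα])
  funext q
  simp [RTree.leaf, WTA.h, hnil, Subsingleton.elim _ qs]

theorem h_bin (M : WTA S B) {σ : S.symb} (hσ : S.rk σ = 2) (t₁ t₂ : RTree S) (q : M.Q) :
    M.h (.bin σ t₁ t₂) q = ∑ q₁, ∑ q₂, M.h t₁ q₁ * M.h t₂ q₂
      * M.δ σ (fun i => if (i : ℕ) = 0 then q₁ else q₂) q := by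
  simp only [RTree.bin, WTA.h]
  rw [sum_pi_prod_mul_of_eq_two hσ]
  simp

end WTA

/-- States of the automaton reading expressions over `n` generators: `leaf` is reached at the
nullary symbols and `tag k` exactly at `comb k`; an expression tree for `b` has weight `b` at
`val` and `1` at `one`, and `sum`, `prod` carry `b ⊕ b'` and `b ⊗ b'` at the node joining two
expression trees, until a leaf on its right (`sum`) or left (`prod`) selects one of them. -/
inductive ExprState (n : ℕ)
  | leaf
  | tag (i : Fin n)
  | val
  | one
  | sum
  | prod
  deriving DecidableEq, Fintype

namespace ExprState

variable {n : ℕ}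

def binTrans (a : Fin n → B) : ExprState n → ExprState n → ExprState n → B
  | leaf, leaf, tag k => if (k : ℕ) = 0 then 1 else 0
  | leaf, tag i, tag k => if (k : ℕ) = i + 1 then 1 else 0
  | tag i, leaf, val => a i
  | tag _, leaf, one => 1
  | val, val, prod => 1
  | val, one, sum => 1
  | one, val, sum => 1
  | one, one, one => 1
  | sum, leaf, val => 1
  | one, leaf, one => 1
  | leaf, prod, val => 1
  | leaf, one, one => 1
  | _, _, _ => 0

def binMap (a : Fin n → B) (u v : ExprState n → B) (q : ExprState n) : B :=
  ∑ q₁, ∑ q₂, u q₁ * v q₂ * binTrans a q₁ q₂ q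

def exprVec (b : B) : ExprState n → B :=
  Pi.single val b + Pi.single one 1

def joinVec (b b' : B) : ExprState n → B :=
  Pi.single prod (b * b') + Pi.single sum (b + b') + Pi.single one 1

@[simp]
theorem exprVec_val (b : B) : exprVec b (val : ExprState n) = b := by
  simp [exprVec]

variable (a : Fin n → B)

theorem binMap_single_single (s₁ s₂ : ExprState n) (c₁ c₂ : B) :
    binMap a (Pi.single s₁ c₁) (Pi.single s₂ c₂) = fun q => c₁ * c₂ * binTrans a s₁ s₂ q := by
  funext q
  simp [binMap, Pi.single_apply, ite_mul]

theorem binMap_add_left (hrd : SBRightDistributive B) (u u' v : ExprState n → B) :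
    binMap a (u + u') v = binMap a u v + binMap a u' v := by
  funext q
  simp only [binMap, Pi.add_apply, ← Finset.sum_add_distrib]
  exact Finset.sum_congr rfl fun _ _ => Finset.sum_congr rfl fun _ _ => by rw [hrd, hrd]

theorem binMap_add_right (hld : SBLeftDistributive B) (hrd : SBRightDistributive B)
    (u v v' : ExprState n → B) :
    binMap a u (v + v') = binMap a u v + binMap a u v' := by
  funext q
  simp only [binMap, Pi.add_apply, ← Finset.sum_add_distrib]
  exact Finset.sum_congr rfl fun _ _ => Finset.sum_congr rfl fun _ _ => by rw [hld, hrd]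

theorem binMap_leaf_leaf (hn : 0 < n) :
    binMap a (Pi.single leaf 1) (Pi.single leaf 1) = Pi.single (tag ⟨0, hn⟩) 1 := by
  ext q; cases q <;> simp [binMap_single_single, binTrans, Pi.single_apply, Fin.ext_iff]

theorem binMap_leaf_tag (i : Fin n) (hi : (i : ℕ) + 1 < n) :
    binMap a (Pi.single leaf 1) (Pi.single (tag i) 1) = Pi.single (tag ⟨i + 1, hi⟩) 1 := by
  ext q; cases q <;> simp [binMap_single_single, binTrans, Pi.single_apply, Fin.ext_iff]

theorem binMap_tag_leaf (i : Fin n) :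
    binMap a (Pi.single (tag i) 1) (Pi.single leaf 1) = exprVec (a i) := by
  ext q; cases q <;> simp [binMap_single_single, binTrans, exprVec]

theorem binMap_exprVec_exprVec (hld : SBLeftDistributive B) (hrd : SBRightDistributive B)
    (b b' : B) :
    binMap a (exprVec b) (exprVec b') = joinVec b b' := by
  simp only [exprVec, joinVec, binMap_add_left a hrd, binMap_add_right a hld hrd,
    binMap_single_single]
  ext q; cases q <;> simp [binTrans]

theorem binMap_joinVec_leaf (hrd : SBRightDistributive B) (b b' : B) :
    binMap a (joinVec b b') (Pi.single leaf 1) = exprVec (b + b') := by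
  simp only [joinVec, exprVec, binMap_add_left a hrd, binMap_single_single]
  ext q; cases q <;> simp [binTrans]

theorem binMap_leaf_joinVec (hld : SBLeftDistributive B) (hrd : SBRightDistributive B)
    (b b' : B) : binMap a (Pi.single leaf 1) (joinVec b b') = exprVec (b * b') := by
  simp only [joinVec, exprVec, binMap_add_right a hld hrd, binMap_single_single]
  ext q; cases q <;> simp [binTrans]

end ExprState

open ExprState in
abbrev exprWTA (S : RankedAlphabet) {n : ℕ} (a : Fin n → B) : WTA S B where
  Q := ExprState n
  fintypeQ := inferInstance
  nonemptyQ := ⟨leaf⟩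
  δ σ qs :=
    if h : S.rk σ = 2 then binTrans a (qs ⟨0, by omega⟩) (qs ⟨1, by omega⟩)
    else if S.rk σ = 0 then Pi.single leaf 1
    else 0
  F := Pi.single val 1

namespace exprWTA

open ExprState

variable {n : ℕ} (a : Fin n → B) {σ α : S.symb}

theorem h_leaf (hα : S.rk α = 0) : (exprWTA S a).h (.leaf hα) = Pi.single leaf 1 := by
  rw [WTA.h_leaf _ hα fun i => absurd i.isLt (by omega)]
  simp [exprWTA, hα]

theorem h_bin (hσ : S.rk σ = 2) (t₁ t₂ : RTree S) :
    (exprWTA S a).h (.bin σ t₁ t₂) = binMap a ((exprWTA S a).h t₁) ((exprWTA S a).h t₂) := by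
  funext q
  rw [WTA.h_bin _ hσ]
  simp only [exprWTA, dif_pos hσ]
  rfl

theorem runSem_eq_h_val (hld : SBLeftDistributive B) (hrd : SBRightDistributive B) (t : RTree S) :
    (exprWTA S a).runSem t = (exprWTA S a).h t val := by
  rw [WTA.runSem_eq_initSem hld hrd, WTA.initSem, Fintype.sum_eq_single val fun q hq => by simp [exprWTA, hq]]
  simp [exprWTA]

theorem h_comb (hσ : S.rk σ = 2) (hα : S.rk α = 0) (k : ℕ) (hk : k < n) :
    (exprWTA S a).h (.comb σ hα k) = Pi.single (tag ⟨k, hk⟩) 1 := by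
  induction k with
  | zero => rw [RTree.comb, h_bin a hσ, h_leaf a hα, binMap_leaf_leaf]
  | succ k ih => rw [RTree.comb, h_bin a hσ, h_leaf a hα, ih (by omega), binMap_leaf_tag]

theorem exists_h_eq_exprVec_of_mem_range (hσ : S.rk σ = 2) (hα : S.rk α = 0) {b : B}
    (hb : b ∈ Set.range a) : ∃ t, (exprWTA S a).h t = exprVec b := by
  obtain ⟨i, rfl⟩ := hb
  exact ⟨.bin σ (.comb σ hα i) (.leaf hα), by
    rw [h_bin a hσ, h_comb a hσ hα i i.isLt, h_leaf a hα, binMap_tag_leaf]⟩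

theorem exists_h_eq_exprVec (hld : SBLeftDistributive B) (hrd : SBRightDistributive B)
    (hσ : S.rk σ = 2) (hα : S.rk α = 0) {A : Set B} (hA : A ⊆ Set.range a)
    (h0 : 0 ∈ Set.range a) (h1 : 1 ∈ Set.range a) {b : B} (hb : SBClosure A b) :
    ∃ t, (exprWTA S a).h t = exprVec b := by
  induction hb with
  | base hb => exact exists_h_eq_exprVec_of_mem_range a hσ hα (hA hb)
  | zero => exact exists_h_eq_exprVec_of_mem_range a hσ hα h0
  | one => exact exists_h_eq_exprVec_of_mem_range a hσ hα h1
  | add _ _ ih ih' =>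
    obtain ⟨t, ht⟩ := ih
    obtain ⟨t', ht'⟩ := ih'
    exact ⟨.bin σ (.bin σ t t') (.leaf hα), by
      rw [h_bin a hσ, h_bin a hσ, ht, ht', h_leaf a hα, binMap_exprVec_exprVec a hld hrd,
        binMap_joinVec_leaf a hrd]⟩
  | mul _ _ ih ih' =>
    obtain ⟨t, ht⟩ := ih
    obtain ⟨t', ht'⟩ := ih'
    exact ⟨.bin σ (.leaf hα) (.bin σ t t'), by
      rw [h_bin a hσ, h_bin a hσ, ht, ht', h_leaf a hα, binMap_exprVec_exprVec a hld hrd,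
        binMap_leaf_joinVec a hld hrd]⟩

end exprWTA

/-- If `Σ` contains a binary symbol and `B` is a finitely generated semiring
(a strong bimonoid which is left- and right-distributive), then there is a wta over
`Σ` and `B` whose run semantics has image all of `B`. -/
theorem statement5 (S : RankedAlphabet) (hbin : ∃ σ, S.rk σ = 2)
    (B : Type) [StrongBimonoid B]
    (hld : SBLeftDistributive B) (hrd : SBRightDistributive B)
    (hfg : ∃ A : Set B, A.Finite ∧ {b : B | SBClosure A b} = Set.univ) :
    ∃ M : WTA S B, Set.range M.runSem = Set.univ := by
  obtain ⟨σ, hσ⟩ := hbin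
  obtain ⟨α, hα⟩ := S.exists_nullary
  obtain ⟨A, hA, hcl⟩ := hfg
  obtain ⟨n, a, ha⟩ := ((hA.insert 1).insert 0).fin_embedding
  refine ⟨exprWTA S a, Set.eq_univ_of_forall fun b => ?_⟩
  have hb : b ∈ {b : B | SBClosure A b} := hcl ▸ Set.mem_univ b
  obtain ⟨t, ht⟩ := exprWTA.exists_h_eq_exprVec a hld hrd hσ hα
    (by rw [ha]; exact (Set.subset_insert 1 A).trans (Set.subset_insert 0 _))
    (by simp [ha]) (by simp [ha]) hb
  exact ⟨t, by rw [exprWTA.runSem_eq_h_val a hld hrd, ht, ExprState.exprVec_val]⟩
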